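/- Let A be a set (trivially ordered) and A' = A ∪ {e} the raising augmentation, i.e., e < a for all a ∈ A. Then the induced order ≤_e on A* coincides with the subsequence (morphological) order: v ≤_e w if and only if v is a sublist (subsequence) of w. -/

import Mathlib

/-- Erase all occurrences of the letter `a` from a word. -/
def aErase {α : Type*} [DecidableEq α] (a : α) (w : List α) : List α :=
  w.filter (· ≠ a)

/-- `w'` is an `a`-extension of `w`: it is obtained by inserting copies of `a` into `w`,
equivalently erasing all occurrences of `a` from `w'` yields `w`. -/
def IsAExt {α : Type*} [DecidableEq α] (a : α) (w w' : List α) : Prop :=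
  aErase a w' = w

/-- The induced relation `≤ₐ` on words, relative to a relation `r` on letters:
`v ≤ₐ w` iff there are `a`-extensions of `v` and `w` of equal length that are
related componentwise (componentwise relation of equal-length lists is `List.Forall₂ r`). -/
def LeExt {α : Type*} [DecidableEq α] (r : α → α → Prop) (a : α) (v w : List α) : Prop :=
  ∃ v' w', IsAExt a v v' ∧ IsAExt a w w' ∧ List.Forall₂ r v' w'

/-!
Erasing the auxiliary letter `a` (the paper's `e`) turns a componentwise comparison of
`a`-extensions into a sublist embedding: a position `a ≤ y` is dropped on the left, a position
`x ≤ x` survives on both sides. Conversely, `v <+ w` is realised by padding `v` with `a`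
exactly at the positions of `w` it skips.
-/

section RaisingAugmentation

variable {β : Type*} [DecidableEq β] {a x : β} {l l' l₁ l₂ : List β}

@[simp]
theorem aErase_cons_self : aErase a (a :: l) = aErase a l := by
  simp [aErase]

theorem aErase_cons_of_ne (hx : x ≠ a) : aErase a (x :: l) = x :: aErase a l := by
  simp [aErase, hx]

theorem aErase_cons_sublist_cons (h : (aErase a l₁).Sublist (aErase a l₂)) :
    (aErase a (x :: l₁)).Sublist (aErase a (x :: l₂)) := by
  by_cases hx : x = a
  · simpa [hx] using h
  · rw [aErase_cons_of_ne hx, aErase_cons_of_ne hx]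
    exact h.cons_cons x

theorem aErase_sublist_aErase_of_forall₂ {v' w' : List β}
    (h : List.Forall₂ (fun x y => x = a ∨ x = y) v' w') :
    (aErase a v').Sublist (aErase a w') := by
  induction h with
  | nil => exact List.Sublist.slnil
  | @cons x y _ l₂ hxy _ ih =>
    rcases hxy with rfl | rfl
    · rw [aErase_cons_self]
      exact ih.trans ((List.sublist_cons_self y l₂).filter _)
    · exact aErase_cons_sublist_cons ih

theorem LeExt.sublist (h : LeExt (fun x y => x = a ∨ x = y) a l₁ l₂) : l₁.Sublist l₂ := by
  obtain ⟨v', w', rfl, rfl, hvw⟩ := h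
  exact aErase_sublist_aErase_of_forall₂ hvw

theorem IsAExt.cons_self (h : IsAExt a l l') : IsAExt a l (a :: l') := by
  simpa [IsAExt] using h

theorem IsAExt.cons (hx : x ≠ a) (h : IsAExt a l l') : IsAExt a (x :: l) (x :: l') := by
  rw [IsAExt, aErase_cons_of_ne hx, h]

theorem leExt_of_sublist (h : l₁.Sublist l₂) (ha : a ∉ l₂) :
    LeExt (fun x y => x = a ∨ x = y) a l₁ l₂ := by
  induction h with
  | slnil => exact ⟨[], [], rfl, rfl, .nil⟩
  | @cons l₁ l₂ x _ ih =>
    obtain ⟨v', w', hv, hw, hvw⟩ := ih (ha ∘ List.mem_cons_of_mem x)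
    have hx : x ≠ a := fun hx => ha (hx ▸ List.mem_cons_self)
    exact ⟨a :: v', x :: w', hv.cons_self, hw.cons hx, .cons (.inl rfl) hvw⟩
  | @cons_cons l₁ l₂ x _ ih =>
    obtain ⟨v', w', hv, hw, hvw⟩ := ih (ha ∘ List.mem_cons_of_mem x)
    have hx : x ≠ a := fun hx => ha (hx ▸ List.mem_cons_self)
    exact ⟨x :: v', x :: w', hv.cons hx, hw.cons hx, .cons (.inr rfl) hvw⟩

theorem leExt_iff_sublist (ha : a ∉ l₂) :
    LeExt (fun x y => x = a ∨ x = y) a l₁ l₂ ↔ l₁.Sublist l₂ :=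
  ⟨LeExt.sublist, (leExt_of_sublist · ha)⟩

end RaisingAugmentation

theorem map_sublist_map_iff_of_injective {α β : Type*} {f : α → β} (hf : Function.Injective f)
    {v w : List α} : (v.map f).Sublist (w.map f) ↔ v.Sublist w := by
  refine ⟨fun h => ?_, List.Sublist.map f⟩
  obtain ⟨l, hl, hmap⟩ := List.sublist_map_iff.mp h
  rwa [List.map_injective_iff.mpr hf hmap]

/-- Raising augmentation of a discrete alphabet: the induced order is the sublist
(morphological) order. The augmented alphabet is `Option α` with auxiliary letter
`none` below everything, and the discrete order on `A`. -/
theorem stmt_13 {α : Type*} [DecidableEq α] (v w : List α) :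
    LeExt (fun x y : Option α => x = none ∨ x = y) none (v.map some) (w.map some)
      ↔ v.Sublist w := by
  rw [leExt_iff_sublist (by simp), map_sublist_map_iff_of_injective (Option.some_injective α)]
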